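/- arXiv:0910.2856 — 2 statements merged into one kernel-verified Lean document; each statement's English description precedes it below -/
import Mathlib

section
/- Let (X, μ) be a σ-finite measure space, let A, B be measurable sets with μ(A) = μ(B) < ∞, and fix an integer i ≥ 0. For an invertible μ-preserving transformation S of X, let A_0(S), A_1(S), … be the sets defined recursively by A_0(S) = A ∩ B and A_j(S) = (A \ ⋃_{k<j} A_k(S)) ∩ S^{-j}(B \ ⋃_{k<j} S^k A_k(S)). If S, S_1, S_2, … are invertible μ-preserving transformations with S_n → S weakly (that is, μ(S_n C ∩ D) → μ(S C ∩ D) for all measurable sets C, D of finite measure), then μ(A_0(S_n) ⊔ ⋯ ⊔ A_i(S_n)) → μ(A_0(S) ⊔ ⋯ ⊔ A_i(S)) as n → ∞. -/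
open MeasureTheory Set Filter

/-- The sets `A_i(S)` of the filling scheme: `A_0 = A ∩ B` and, for `i > 0`,
`A_i = (A \ ⋃_{j<i} A_j) ∩ S^{-i}(B \ ⋃_{j<i} S^j A_j)`. -/
def fillingSet {X : Type*} (S : X → X) (A B : Set X) : ℕ → Set X
  | 0 => A ∩ B
  | i + 1 =>
      (A \ ⋃ j : Fin (i + 1), fillingSet S A B j) ∩
        S^[i + 1] ⁻¹' (B \ ⋃ j : Fin (i + 1), S^[(j : ℕ)] '' fillingSet S A B j)

/-!
Weak convergence of measure-preserving automorphisms upgrades to strong convergence: for `C`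
of finite measure, `μ (S_n C ∆ S C) = 2 (μ C - μ (S_n C ∩ S C)) → 0`. Convergence of sets in
the pseudometric `μ (· ∆ ·)` survives finite intersections, differences and unions, and,
because every `S_n` preserves `μ`, also applying `S_n^k` or `S_n^{-k}` to a sequence whose limit
has finite measure. Each `A_j` is built from `A`, `B` and the earlier `A_k` by exactly these
operations, so strong induction gives `A_j(S_n) → A_j(S)`; the union of the first `i + 1` of
them converges as well, and its measure converges because its limit lies in `A`.
-/

open scoped symmDiff Topology ENNReal

section SymmDiff

variable {X ι : Type*} [MeasurableSpace X] {μ : Measure X} {l : Filter ι}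

def TendstoSymmDiff (μ : Measure X) (l : Filter ι) (s : ι → Set X) (t : Set X) : Prop :=
  Tendsto (fun i => μ (s i ∆ t)) l (𝓝 0)

lemma measure_symmDiff_eq_two_mul_sub_inter {s t : Set X} (hs : MeasurableSet s)
    (ht : MeasurableSet t) (hst : μ s = μ t) (ht' : μ t < ∞) :
    μ (s ∆ t) = 2 * (μ t - μ (s ∩ t)) := by
  have hfin : μ (s ∩ t) ≠ ∞ := ((measure_mono inter_subset_right).trans_lt ht').ne
  rw [measure_symmDiff_eq hs.nullMeasurableSet ht.nullMeasurableSet, two_mul]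
  congr 1
  · rw [← hst, ← measure_inter_add_sdiff s ht, ENNReal.add_sub_cancel_left hfin]
  · rw [← measure_inter_add_sdiff t hs, inter_comm, ENNReal.add_sub_cancel_left hfin]

namespace TendstoSymmDiff

variable {s s' : ι → Set X} {t t' : Set X}

lemma of_le {f : ι → ℝ≥0∞} (hf : Tendsto f l (𝓝 0)) (h : ∀ i, μ (s i ∆ t) ≤ f i) :
    TendstoSymmDiff μ l s t :=
  tendsto_of_tendsto_of_tendsto_of_le_of_le tendsto_const_nhds hf (fun _ => zero_le) h

lemma const (t : Set X) : TendstoSymmDiff μ l (fun _ => t) t := by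
  simpa [TendstoSymmDiff] using tendsto_const_nhds

lemma inter (hs : TendstoSymmDiff μ l s t) (hs' : TendstoSymmDiff μ l s' t') :
    TendstoSymmDiff μ l (fun i => s i ∩ s' i) (t ∩ t') := by
  refine of_le (by simpa using hs.add hs') fun i => (measure_mono ?_).trans (measure_union_le _ _)
  intro x
  simp only [mem_symmDiff, mem_inter_iff, mem_union]
  tauto

lemma diff (hs : TendstoSymmDiff μ l s t) (hs' : TendstoSymmDiff μ l s' t') :
    TendstoSymmDiff μ l (fun i => s i \ s' i) (t \ t') := by
  refine of_le (by simpa using hs.add hs') fun i => (measure_mono ?_).trans (measure_union_le _ _)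
  intro x
  simp only [mem_symmDiff, Set.mem_sdiff, mem_union]
  tauto

lemma iUnion {κ : Type*} [Fintype κ] {s : ι → κ → Set X} {t : κ → Set X}
    (hs : ∀ k, TendstoSymmDiff μ l (fun i => s i k) (t k)) :
    TendstoSymmDiff μ l (fun i => ⋃ k, s i k) (⋃ k, t k) :=
  of_le (by simpa using tendsto_finsetSum Finset.univ fun k _ => hs k) fun i =>
    (measure_mono iUnion_symmDiff_iUnion_subset).trans (measure_iUnion_fintype_le _ _)

lemma biUnion {κ : Type*} (F : Finset κ) {s : ι → κ → Set X} {t : κ → Set X}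
    (hs : ∀ k ∈ F, TendstoSymmDiff μ l (fun i => s i k) (t k)) :
    TendstoSymmDiff μ l (fun i => ⋃ k ∈ F, s i k) (⋃ k ∈ F, t k) :=
  of_le (by simpa using tendsto_finsetSum F hs) fun i =>
    (measure_mono biSup_symmDiff_biSup_le).trans (measure_biUnion_finset_le _ _)

lemma tendsto_measure (hs : TendstoSymmDiff μ l s t) (ht : μ t < ∞) :
    Tendsto (fun i => μ (s i)) l (𝓝 (μ t)) := by
  refine tendsto_of_tendsto_of_tendsto_of_le_of_le (g := fun i => μ t - μ (s i ∆ t))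
    (h := fun i => μ t + μ (s i ∆ t)) ?_ ?_ (fun i => ?_) (fun i => ?_)
  · simpa using ENNReal.Tendsto.sub tendsto_const_nhds hs (.inl ht.ne)
  · simpa using tendsto_const_nhds.add hs
  · rw [tsub_le_iff_left, ← tsub_le_iff_right, symmDiff_comm]
    exact le_measure_symmDiff
  · have h := measure_symmDiff_le (μ := μ) (s i) t ⊥
    rwa [symmDiff_bot, symmDiff_bot, add_comm] at h

end TendstoSymmDiff

end SymmDiff

section Automorphisms

variable {X Y ι : Type*} [MeasurableSpace X] [MeasurableSpace Y] {μ : Measure X} {l : Filter ι}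

lemma MeasureTheory.MeasurePreserving.measure_image_equiv {ν : Measure Y} {T : X ≃ᵐ Y}
    (hT : MeasurePreserving T μ ν) (s : Set X) : ν (T '' s) = μ s := by
  rw [T.image_eq_preimage_symm]
  exact (hT.symm T).measure_preimage_equiv s

lemma MeasureTheory.MeasurePreserving.measure_image_iterate {T : X ≃ᵐ X}
    (hT : MeasurePreserving T μ μ) (k : ℕ) (s : Set X) : μ (T^[k] '' s) = μ s := by
  induction k with
  | zero => simp
  | succ k ih => rw [Function.iterate_succ', image_comp, hT.measure_image_equiv, ih]

lemma MeasurableEquiv.measurableSet_image_iterate (T : X ≃ᵐ X) (k : ℕ) {s : Set X}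
    (hs : MeasurableSet s) : MeasurableSet (T^[k] '' s) := by
  induction k with
  | zero => simpa
  | succ k ih => rw [Function.iterate_succ', image_comp]; exact T.measurableSet_image.2 ih

lemma MeasurableEquiv.preimage_iterate_eq_image_iterate_symm (T : X ≃ᵐ X) (k : ℕ) (s : Set X) :
    T^[k] ⁻¹' s = T.symm^[k] '' s := by
  rw [preimage_iterate_eq, image_iterate_eq]
  congr
  funext s
  rw [T.symm.image_eq_preimage_symm, T.symm_symm]

def StrongTendsto (μ : Measure X) (l : Filter ι) (T : ι → X ≃ᵐ X) (S : X ≃ᵐ X) : Prop :=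
  ∀ C, MeasurableSet C → μ C < ∞ → TendstoSymmDiff μ l (fun i => T i '' C) (S '' C)

variable {T : ι → X ≃ᵐ X} {S : X ≃ᵐ X}

lemma strongTendsto_of_tendsto_measure_image_inter (hS : MeasurePreserving S μ μ)
    (hT : ∀ i, MeasurePreserving (T i) μ μ)
    (hweak : ∀ C D : Set X, MeasurableSet C → MeasurableSet D → μ C < ∞ → μ D < ∞ →
      Tendsto (fun i => μ (T i '' C ∩ D)) l (𝓝 (μ (S '' C ∩ D)))) :
    StrongTendsto μ l T S := by
  intro C hC hCfin
  have hSC : MeasurableSet (S '' C) := S.measurableSet_image.2 hC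
  have hμSC : μ (S '' C) = μ C := hS.measure_image_equiv C
  have hinter : Tendsto (fun i => μ (T i '' C ∩ S '' C)) l (𝓝 (μ C)) := by
    simpa [hμSC] using hweak C _ hC hSC hCfin (hμSC ▸ hCfin)
  have hsymmDiff (i : ι) :
      μ ((T i '' C) ∆ (S '' C)) = 2 * (μ C - μ (T i '' C ∩ S '' C)) := by
    rw [measure_symmDiff_eq_two_mul_sub_inter ((T i).measurableSet_image.2 hC) hSC
      (by rw [(hT i).measure_image_equiv, hμSC]) (hμSC ▸ hCfin), hμSC]
  simpa [TendstoSymmDiff, hsymmDiff] using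
    ENNReal.Tendsto.const_mul (ENNReal.Tendsto.sub tendsto_const_nhds hinter (.inl hCfin.ne))
      (.inr ENNReal.ofNat_ne_top)

namespace StrongTendsto

lemma symm (hS : MeasurePreserving S μ μ) (hT : ∀ i, MeasurePreserving (T i) μ μ)
    (h : StrongTendsto μ l T S) : StrongTendsto μ l (fun i => (T i).symm) S.symm := by
  intro C hC hCfin
  have key (i : ι) : μ (((T i).symm '' C) ∆ (S.symm '' C)) =
      μ ((T i '' (S.symm '' C)) ∆ (S '' (S.symm '' C))) := by
    rw [← (hT i).measure_image_equiv, image_symmDiff (T i).injective, symmDiff_comm]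
    simp [image_image]
  simpa only [TendstoSymmDiff, key] using
    h _ (S.symm.measurableSet_image.2 hC) (by rwa [(hS.symm S).measure_image_equiv])

variable {s : ι → Set X} {t : Set X}

lemma image (hT : ∀ i, MeasurePreserving (T i) μ μ) (h : StrongTendsto μ l T S)
    (hs : TendstoSymmDiff μ l s t) (ht : MeasurableSet t) (ht' : μ t < ∞) :
    TendstoSymmDiff μ l (fun i => T i '' s i) (S '' t) :=
  TendstoSymmDiff.of_le (by simpa using hs.add (h t ht ht')) fun i =>
    calc μ ((T i '' s i) ∆ (S '' t))
      _ ≤ μ ((T i '' s i) ∆ (T i '' t)) + μ ((T i '' t) ∆ (S '' t)) := measure_symmDiff_le _ _ _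
      _ = μ (s i ∆ t) + μ ((T i '' t) ∆ (S '' t)) := by
        rw [← image_symmDiff (T i).injective, (hT i).measure_image_equiv]

lemma image_iterate (hS : MeasurePreserving S μ μ) (hT : ∀ i, MeasurePreserving (T i) μ μ)
    (h : StrongTendsto μ l T S) (hs : TendstoSymmDiff μ l s t) (ht : MeasurableSet t)
    (ht' : μ t < ∞) (k : ℕ) :
    TendstoSymmDiff μ l (fun i => (T i)^[k] '' s i) (S^[k] '' t) := by
  induction k with
  | zero => simpa using hs
  | succ k ih =>
    simp only [Function.iterate_succ', image_comp]
    exact h.image hT ih (S.measurableSet_image_iterate k ht) (by rwa [hS.measure_image_iterate])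

lemma preimage_iterate (hS : MeasurePreserving S μ μ) (hT : ∀ i, MeasurePreserving (T i) μ μ)
    (h : StrongTendsto μ l T S) (hs : TendstoSymmDiff μ l s t) (ht : MeasurableSet t)
    (ht' : μ t < ∞) (k : ℕ) :
    TendstoSymmDiff μ l (fun i => (T i)^[k] ⁻¹' s i) (S^[k] ⁻¹' t) := by
  simp only [MeasurableEquiv.preimage_iterate_eq_image_iterate_symm]
  exact (h.symm hS hT).image_iterate (hS.symm S) (fun i => (hT i).symm _) hs ht ht' k

end StrongTendsto

end Automorphisms

lemma fillingSet_subset {X : Type*} (S : X → X) (A B : Set X) (j : ℕ) :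
    fillingSet S A B j ⊆ A := by
  cases j with
  | zero => rw [fillingSet]; exact inter_subset_left
  | succ j => rw [fillingSet]; exact inter_subset_left.trans sdiff_subset

section FillingScheme

variable {X ι : Type*} [MeasurableSpace X] {μ : Measure X} {l : Filter ι} {A B : Set X}

lemma MeasurableEquiv.measurableSet_fillingSet (T : X ≃ᵐ X) (hA : MeasurableSet A)
    (hB : MeasurableSet B) (j : ℕ) : MeasurableSet (fillingSet T A B j) := by
  induction j using Nat.strong_induction_on with
  | _ j ih =>
    cases j with
    | zero => rw [fillingSet]; exact hA.inter hB
    | succ j =>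
      have hprev (k : Fin (j + 1)) : MeasurableSet (fillingSet T A B k) := ih k k.2
      rw [fillingSet]
      exact (hA.diff (.iUnion hprev)).inter <| T.measurable.iterate _ <|
        hB.diff (.iUnion fun k : Fin (j + 1) => T.measurableSet_image_iterate k (hprev k))

lemma StrongTendsto.tendstoSymmDiff_fillingSet {T : ι → X ≃ᵐ X} {S : X ≃ᵐ X}
    (hS : MeasurePreserving S μ μ) (hT : ∀ i, MeasurePreserving (T i) μ μ)
    (h : StrongTendsto μ l T S) (hA : MeasurableSet A) (hB : MeasurableSet B)
    (hAfin : μ A < ∞) (hBfin : μ B < ∞) (j : ℕ) :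
    TendstoSymmDiff μ l (fun i => fillingSet (T i) A B j) (fillingSet S A B j) := by
  induction j using Nat.strong_induction_on with
  | _ j ih =>
    cases j with
    | zero => simpa only [fillingSet] using TendstoSymmDiff.const (A ∩ B)
    | succ j =>
      have hprev (k : Fin (j + 1)) :
          TendstoSymmDiff μ l (fun i => fillingSet (T i) A B k) (fillingSet S A B k) :=
        ih k k.2
      have hmeas (k : ℕ) : MeasurableSet (fillingSet S A B k) :=
        S.measurableSet_fillingSet hA hB k
      have hfin (k : ℕ) : μ (fillingSet S A B k) < ∞ :=
        (measure_mono (fillingSet_subset _ A B k)).trans_lt hAfin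
      have himages := TendstoSymmDiff.iUnion fun k : Fin (j + 1) =>
        h.image_iterate hS hT (hprev k) (hmeas k) (hfin k) k
      simp only [fillingSet]
      exact ((TendstoSymmDiff.const A).diff (.iUnion hprev)).inter <|
        h.preimage_iterate hS hT ((TendstoSymmDiff.const B).diff himages)
          (hB.diff (.iUnion fun k : Fin (j + 1) => S.measurableSet_image_iterate k (hmeas k)))
          ((measure_mono sdiff_subset).trans_lt hBfin) _

end FillingScheme

theorem tendsto_measure_fillingSet_of_weak_tendsto_general {X : Type*} [MeasurableSpace X]
    (μ : Measure X) (A B : Set X)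
    (hA : MeasurableSet A) (hB : MeasurableSet B)
    (hAB : μ A = μ B) (hAfin : μ A < ⊤) (i : ℕ)
    (S : X ≃ᵐ X) (Sn : ℕ → X ≃ᵐ X)
    (hS : MeasurePreserving S μ μ) (hSn : ∀ n, MeasurePreserving (Sn n) μ μ)
    (hconv : ∀ C D : Set X, MeasurableSet C → MeasurableSet D → μ C < ⊤ → μ D < ⊤ →
      Tendsto (fun n => μ ((Sn n) '' C ∩ D)) atTop (nhds (μ ((S : X → X) '' C ∩ D)))) :
    Tendsto (fun n => μ (⋃ j ∈ Finset.range (i + 1), fillingSet (Sn n) A B j)) atTop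
      (nhds (μ (⋃ j ∈ Finset.range (i + 1), fillingSet S A B j))) := by
  have hstrong : StrongTendsto μ atTop Sn S :=
    strongTendsto_of_tendsto_measure_image_inter hS hSn hconv
  have hunion := TendstoSymmDiff.biUnion (Finset.range (i + 1)) fun j _ =>
    hstrong.tendstoSymmDiff_fillingSet hS hSn hA hB hAfin (hAB ▸ hAfin) j
  exact hunion.tendsto_measure <|
    (measure_mono (iUnion₂_subset fun j _ => fillingSet_subset S A B j)).trans_lt hAfin

/-- Continuity of `S ↦ μ(A_0(S) ⊔ ⋯ ⊔ A_i(S))` in the weak topology: if the invertible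
`μ`-preserving transformations `S_n` converge weakly to `S`, then
`μ(A_0(S_n) ⊔ ⋯ ⊔ A_i(S_n)) → μ(A_0(S) ⊔ ⋯ ⊔ A_i(S))`. -/
theorem tendsto_measure_fillingSet_of_weak_tendsto {X : Type*} [MeasurableSpace X]
    (μ : Measure X) [SigmaFinite μ] (A B : Set X)
    (hA : MeasurableSet A) (hB : MeasurableSet B)
    (hAB : μ A = μ B) (hAfin : μ A < ⊤) (i : ℕ)
    (S : X ≃ᵐ X) (Sn : ℕ → X ≃ᵐ X)
    (hS : MeasurePreserving S μ μ) (hSn : ∀ n, MeasurePreserving (Sn n) μ μ)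
    (hconv : ∀ C D : Set X, MeasurableSet C → MeasurableSet D → μ C < ⊤ → μ D < ⊤ →
      Tendsto (fun n => μ ((Sn n) '' C ∩ D)) atTop (nhds (μ ((S : X → X) '' C ∩ D)))) :
    Tendsto (fun n => μ (⋃ j ∈ Finset.range (i + 1), fillingSet (Sn n) A B j)) atTop
      (nhds (μ (⋃ j ∈ Finset.range (i + 1), fillingSet S A B j))) :=
  tendsto_measure_fillingSet_of_weak_tendsto_general μ A B hA hB hAB hAfin i S Sn hS hSn hconv
end

section
/- Let S be an invertible μ-preserving transformation of a σ-finite measure space (X, μ). Suppose there is a sequence (ξ_n)_{n≥1} where each ξ_n is a finite collection of pairwise disjoint measurable sets of finite positive measure (the atoms of ξ_n), satisfying: (a) for every measurable set C with μ(C) < ∞ there exist sets H_n, each a union of some atoms of ξ_n, with μ(C △ H_n) → 0 as n → ∞; and (b) for every n and every pair of atoms Δ_1, Δ_2 ∈ ξ_n there exist a measurable set A ⊆ Δ_1 with μ(A) > μ(Δ_1)/2 and a μ-preserving one-to-one measurable map γ : A → Δ_2 such that for every x ∈ A one has γx ∈ { S^i x : i ∈ ℤ }. Then S is ergodic. -/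
/-!
Suppose `E` is `S`-invariant with `μ E ≠ 0` and `μ Eᶜ ≠ 0`. Approximating finite-measure parts
of `E` and of `Eᶜ` by unions of atoms gives, for one large `n`, an atom `Δ₁` lying more than
three quarters inside `E` and an atom `Δ₂` lying more than three quarters inside `Eᶜ`. The maps
`γ` move points along `S`-orbits, so they preserve `E`: the one defined on more than half of `Δ₁`
gives `μ (Δ₁ \ E) + μ (Δ₂ ∩ E) > μ Δ₁ / 2`, the one defined on more than half of `Δ₂` gives the
same sum `> μ Δ₂ / 2`, whereas the choice of the atoms makes that sum `< max (μ Δ₁) (μ Δ₂) / 2`.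
-/
open MeasureTheory Set Filter
open scoped ENNReal symmDiff

theorem Equiv.Perm.zpow_apply_mem_iff_of_preimage_eq {X : Type*} {S : Equiv.Perm X} {E : Set X}
    (h : S ⁻¹' E = E) (i : ℤ) (x : X) : (S ^ i) x ∈ E ↔ x ∈ E :=
  MulAction.mem_stabilizer_set.mp
    (zpow_mem (MulAction.mem_stabilizer_set (a := S).mpr fun y => Set.ext_iff.mp h y) i) x

theorem Set.mapsTo_of_forall_exists_zpow_apply {X : Type*} {S : Equiv.Perm X} {E A : Set X}
    {γ : X → X} (h : S ⁻¹' E = E) (horb : ∀ x ∈ A, ∃ i : ℤ, γ x = (S ^ i) x) :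
    MapsTo γ (A ∩ E) E := fun x ⟨hxA, hxE⟩ => by
  obtain ⟨i, hi⟩ := horb x hxA
  rw [hi]
  exact (Equiv.Perm.zpow_apply_mem_iff_of_preimage_eq h i x).mpr hxE

theorem ENNReal.add_lt_max_half {a b x y : ℝ≥0∞} (hx : x < a / 4) (hy : y < b / 4) :
    x + y < max (a / 2) (b / 2) := by
  have quarters (c : ℝ≥0∞) : c / 4 + c / 4 = c / 2 := by
    rw [← ENNReal.add_halves (c / 2), div_eq_mul_inv, div_eq_mul_inv, div_eq_mul_inv, mul_assoc,
      ← ENNReal.mul_inv (by simp) (by simp)]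
    norm_num
  rcases le_total a b with hab | hab
  · refine lt_max_of_lt_right ((quarters b).symm ▸ ENNReal.add_lt_add ?_ hy)
    exact hx.trans_le (by gcongr)
  · refine lt_max_of_lt_left ((quarters a).symm ▸ ENNReal.add_lt_add hx ?_)
    exact hy.trans_le (by gcongr)

namespace MeasureTheory

variable {X : Type*} [MeasurableSpace X] {μ : Measure X}

theorem mul_measure_sUnion_le_measure_sUnion_diff {σ : Finset (Set X)} {F : Set X} {ε : ℝ≥0∞}
    (hσ : ∀ Δ ∈ σ, MeasurableSet Δ) (hdisj : (σ : Set (Set X)).PairwiseDisjoint id)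
    (hF : MeasurableSet F) (h : ∀ Δ ∈ σ, ε * μ Δ ≤ μ (Δ \ F)) :
    ε * μ (⋃₀ σ) ≤ μ (⋃₀ σ \ F) := by
  have hdisj' : (σ : Set (Set X)).PairwiseDisjoint (· \ F) := fun a ha b hb hab =>
    (hdisj ha hb hab).mono sdiff_subset sdiff_subset
  simp only [sUnion_eq_biUnion, Finset.set_biUnion_coe, iUnion_sdiff]
  rw [measure_biUnion_finset (f := fun Δ => Δ) hdisj hσ,
    measure_biUnion_finset hdisj' fun Δ hΔ => (hσ Δ hΔ).diff hF, Finset.mul_sum]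
  exact Finset.sum_le_sum h

theorem measure_diff_le_measure_symmDiff {C F H : Set X} (hCF : C ⊆ F) :
    μ (H \ F) ≤ μ (C ∆ H) :=
  measure_mono fun _ hx => Or.inr ⟨hx.1, fun hC => hx.2 (hCF hC)⟩

theorem measure_le_add_measure_symmDiff (s t : Set X) : μ s ≤ μ t + μ (s ∆ t) :=
  tsub_le_iff_left.mp le_measure_symmDiff

theorem eventually_exists_measure_diff_lt_mul [SigmaFinite μ] (ξ : ℕ → Finset (Set X))
    (hmeas : ∀ n, ∀ Δ ∈ ξ n, MeasurableSet Δ)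
    (hdisj : ∀ n, (ξ n : Set (Set X)).PairwiseDisjoint id)
    (happrox : ∀ C : Set X, MeasurableSet C → μ C < ⊤ →
      ∃ σ : ℕ → Finset (Set X), (∀ n, σ n ⊆ ξ n) ∧
        Tendsto (fun n => μ (C ∆ ⋃₀ (σ n : Set (Set X)))) atTop (nhds 0))
    {F : Set X} (hF : MeasurableSet F) (hF0 : μ F ≠ 0) {ε : ℝ≥0∞} (hε : ε ≠ 0) (hε' : ε ≠ ∞) :
    ∀ᶠ n in atTop, ∃ Δ ∈ ξ n, μ (Δ \ F) < ε * μ Δ := by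
  obtain ⟨C, hC, hCF, hC0, hCfin⟩ :=
    Measure.exists_subset_measure_lt_top hF (pos_iff_ne_zero.2 hF0)
  obtain ⟨σ, hσξ, hσ⟩ := happrox C hC hCfin
  have hδ : 0 < ε * μ C / (1 + ε) :=
    ENNReal.div_pos (mul_ne_zero hε hC0.ne') (by simpa using hε')
  filter_upwards [hσ.eventually_lt_const hδ] with n hn
  by_contra! hbad
  set H := ⋃₀ (σ n : Set (Set X))
  have hH : ε * μ H ≤ μ (H \ F) :=
    mul_measure_sUnion_le_measure_sUnion_diff (fun Δ hΔ => hmeas n Δ (hσξ n hΔ))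
      ((hdisj n).subset (Finset.coe_subset.2 (hσξ n))) hF fun Δ hΔ => hbad Δ (hσξ n hΔ)
  have hCH : ε * μ C ≤ μ (C ∆ H) * (1 + ε) := calc
    ε * μ C ≤ ε * μ H + ε * μ (C ∆ H) := by
      rw [← mul_add]; exact mul_le_mul_right (measure_le_add_measure_symmDiff C H) ε
    _ ≤ μ (C ∆ H) + ε * μ (C ∆ H) := by
      gcongr; exact hH.trans (measure_diff_le_measure_symmDiff hCF)
    _ = μ (C ∆ H) * (1 + ε) := by ring
  exact hCH.not_gt (ENNReal.mul_lt_of_lt_div hn)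

theorem measure_le_measure_add_measure_diff_of_mapsTo {A Δ E T : Set X} {γ : X → X}
    (hA : A ⊆ Δ) (hγ : MapsTo γ (A ∩ E) T)
    (hpres : μ (A ∩ γ ⁻¹' T) ≤ μ T) : μ A ≤ μ T + μ (Δ \ E) := calc
  μ A ≤ μ (A ∩ E) + μ (A \ E) := measure_le_inter_add_sdiff μ A E
  _ ≤ μ (A ∩ γ ⁻¹' T) + μ (Δ \ E) :=
    add_le_add (measure_mono fun _ hx => ⟨hx.1, hγ hx⟩)
      (measure_mono (sdiff_subset_sdiff_left hA))
  _ ≤ μ T + μ (Δ \ E) := add_le_add_left hpres _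

end MeasureTheory

theorem ergodic_of_approximating_partitions_general {X : Type*} [MeasurableSpace X]
    (μ : Measure X) [SigmaFinite μ] (S : Equiv.Perm X)
    (hSmp : MeasurePreserving S μ μ)
    (ξ : ℕ → Finset (Set X))
    (hmeas : ∀ n, ∀ Δ ∈ ξ n, MeasurableSet Δ)
    (hdisj : ∀ n, ∀ Δ₁ ∈ ξ n, ∀ Δ₂ ∈ ξ n, Δ₁ ≠ Δ₂ → Disjoint Δ₁ Δ₂)
    (happrox : ∀ C : Set X, MeasurableSet C → μ C < ⊤ →
      ∃ σ : ℕ → Finset (Set X), (∀ n, σ n ⊆ ξ n) ∧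
        Tendsto (fun n => μ (symmDiff C (⋃₀ (σ n : Set (Set X))))) atTop (nhds 0))
    (horbit : ∀ n, ∀ Δ₁ ∈ ξ n, ∀ Δ₂ ∈ ξ n,
      ∃ (A : Set X) (γ : X → X), A ⊆ Δ₁ ∧ MeasurableSet A ∧ μ Δ₁ / 2 < μ A ∧
        MapsTo γ A Δ₂ ∧ InjOn γ A ∧ Measurable (A.restrict γ) ∧
        (∀ D : Set X, D ⊆ Δ₂ → MeasurableSet D → μ (A ∩ γ ⁻¹' D) = μ D) ∧
        ∀ x ∈ A, ∃ i : ℤ, γ x = (S ^ i) x) :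
    Ergodic S μ := by
  refine ⟨hSmp, ⟨fun E hE hSE => ?_⟩⟩
  rw [eventuallyConst_set', ae_eq_empty, ae_eq_univ]
  by_contra! ⟨hE0, hEc0⟩
  have hSEc : S ⁻¹' Eᶜ = Eᶜ := by rw [preimage_compl, hSE]
  have atom_mostly_in {F : Set X} (hF : MeasurableSet F) (hF0 : μ F ≠ 0) :
      ∀ᶠ n in atTop, ∃ Δ ∈ ξ n, μ (Δ \ F) < μ Δ / 4 := by
    simpa only [ENNReal.div_eq_inv_mul] using eventually_exists_measure_diff_lt_mul ξ hmeas
      (fun n _ ha _ hb => hdisj n _ ha _ hb) happrox hF hF0 (by simp) (by simp)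
  obtain ⟨n, ⟨Δ₁, hΔ₁, h₁⟩, ⟨Δ₂, hΔ₂, h₂⟩⟩ :=
    ((atom_mostly_in hE hE0).and (atom_mostly_in hE.compl hEc0)).exists
  rw [sdiff_compl] at h₂
  obtain ⟨A, γ, hA, -, hμA, hγ, -, -, hpres, horb⟩ := horbit n Δ₁ hΔ₁ Δ₂ hΔ₂
  obtain ⟨A', γ', hA', -, hμA', hγ', -, -, hpres', horb'⟩ := horbit n Δ₂ hΔ₂ Δ₁ hΔ₁
  have hΔ₁E : μ Δ₁ / 2 < μ (Δ₁ \ E) + μ (Δ₂ ∩ E) :=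
    (hμA.trans_le <| measure_le_measure_add_measure_diff_of_mapsTo hA
      ((hγ.mono_left inter_subset_left).inter (mapsTo_of_forall_exists_zpow_apply hSE horb))
      (hpres _ inter_subset_left ((hmeas n Δ₂ hΔ₂).inter hE)).le).trans_eq (add_comm _ _)
  have hΔ₂E : μ Δ₂ / 2 < μ (Δ₁ \ E) + μ (Δ₂ ∩ E) := by
    simpa only [← sdiff_eq, sdiff_compl] using hμA'.trans_le <|
      measure_le_measure_add_measure_diff_of_mapsTo hA'
        ((hγ'.mono_left inter_subset_left).inter (mapsTo_of_forall_exists_zpow_apply hSEc horb'))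
        (hpres' _ inter_subset_left ((hmeas n Δ₁ hΔ₁).inter hE.compl)).le
  exact (ENNReal.add_lt_max_half h₁ h₂).not_ge (max_le hΔ₁E.le hΔ₂E.le)

/-- Ergodicity criterion: let `S` be an invertible `μ`-preserving transformation and let
`(ξ n)` be a sequence of finite collections of pairwise disjoint measurable sets of
finite positive measure such that (a) every set of finite measure is approximated by
unions of atoms of `ξ n`, and (b) for every `n` and atoms `Δ₁, Δ₂ ∈ ξ n` there are a
measurable `A ⊆ Δ₁` with `μ A > μ Δ₁ / 2` and a one-to-one measurable `μ`-preserving map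
`γ : A → Δ₂` moving each point along its `S`-orbit. Then `S` is ergodic. -/
theorem ergodic_of_approximating_partitions {X : Type*} [MeasurableSpace X]
    (μ : Measure X) [SigmaFinite μ] (S : Equiv.Perm X)
    (hSmeas : Measurable S) (hSsymm : Measurable S.symm)
    (hSmp : MeasurePreserving S μ μ)
    (ξ : ℕ → Finset (Set X))
    (hmeas : ∀ n, ∀ Δ ∈ ξ n, MeasurableSet Δ)
    (hpos : ∀ n, ∀ Δ ∈ ξ n, 0 < μ Δ)
    (hfin : ∀ n, ∀ Δ ∈ ξ n, μ Δ < ⊤)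
    (hdisj : ∀ n, ∀ Δ₁ ∈ ξ n, ∀ Δ₂ ∈ ξ n, Δ₁ ≠ Δ₂ → Disjoint Δ₁ Δ₂)
    (happrox : ∀ C : Set X, MeasurableSet C → μ C < ⊤ →
      ∃ σ : ℕ → Finset (Set X), (∀ n, σ n ⊆ ξ n) ∧
        Tendsto (fun n => μ (symmDiff C (⋃₀ (σ n : Set (Set X))))) atTop (nhds 0))
    (horbit : ∀ n, ∀ Δ₁ ∈ ξ n, ∀ Δ₂ ∈ ξ n,
      ∃ (A : Set X) (γ : X → X), A ⊆ Δ₁ ∧ MeasurableSet A ∧ μ Δ₁ / 2 < μ A ∧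
        MapsTo γ A Δ₂ ∧ InjOn γ A ∧ Measurable (A.restrict γ) ∧
        (∀ D : Set X, D ⊆ Δ₂ → MeasurableSet D → μ (A ∩ γ ⁻¹' D) = μ D) ∧
        ∀ x ∈ A, ∃ i : ℤ, γ x = (S ^ i) x) :
    Ergodic S μ :=
  ergodic_of_approximating_partitions_general μ S hSmp ξ hmeas hdisj happrox horbit
end
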